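/- arXiv:1611.06766 — 9 statements merged into one kernel-verified Lean document; each statement's English description precedes it below -/
import Mathlib

section
/- Let d : ℝ → ℝ be nondecreasing and Lipschitz with constant c ≥ 0, let l > 0, β̄ ∈ (0,1], Δt > 0 satisfy Δt·c ≤ l·β̄. Then for any fixed a, R ∈ ℝ, the function x ↦ x + Δt·d((a − x/β̄ + R)/l) is nondecreasing on ℝ. -/
open NNReal

/- The update is the identity plus a map that, by the stability condition `Δt·c ≤ l·β̄`, is
Lipschitz with constant at most `1`; such a perturbation of the identity can never make it
decrease. -/

theorem monotone_add_of_lipschitzWith_le_one {f : ℝ → ℝ} {K : ℝ≥0} (hf : LipschitzWith K f)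
    (hK : K ≤ 1) : Monotone fun x => x + f x := by
  intro x y hxy
  have hdist : |f y - f x| ≤ K * (y - x) := by
    simpa only [Real.dist_eq, abs_of_nonneg (sub_nonneg.2 hxy)] using hf.dist_le_mul y x
  have hshrink : (K : ℝ) * (y - x) ≤ y - x :=
    mul_le_of_le_one_left (sub_nonneg.2 hxy) (by exact_mod_cast hK)
  linarith [neg_abs_le (f y - f x)]

theorem LipschitzWith.const_mul_comp_sub_div {f : ℝ → ℝ} {K : ℝ≥0} (hf : LipschitzWith K f)
    {κ s : ℝ} (hκ : 0 ≤ κ) (hs : 0 < s) (b : ℝ) :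
    LipschitzWith (κ * K / s).toNNReal fun x => κ * f (b - x / s) := by
  refine LipschitzWith.of_dist_le_mul fun x y => ?_
  have hf' : |f (b - x / s) - f (b - y / s)| ≤ K * (|x - y| / s) := by
    simpa only [Real.dist_eq, show b - x / s - (b - y / s) = (y - x) / s by ring, abs_div,
      abs_of_pos hs, abs_sub_comm y x] using hf.dist_le_mul (b - x / s) (b - y / s)
  rw [Real.coe_toNNReal _ (by positivity), Real.dist_eq, Real.dist_eq, ← mul_sub, abs_mul,
    abs_of_nonneg hκ]
  calc κ * |f (b - x / s) - f (b - y / s)| ≤ κ * (K * (|x - y| / s)) := by gcongr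
    _ = κ * K / s * |x - y| := by ring

theorem demand_update_monotone_general (d : ℝ → ℝ) (c l βbar Δt a R : ℝ)
    (hd_lip : LipschitzWith c.toNNReal d)
    (hl : 0 < l) (hβbar0 : 0 < βbar) (hΔt : 0 < Δt)
    (hstab : Δt * c ≤ l * βbar) :
    Monotone (fun x : ℝ => x + Δt * d ((a - x / βbar + R) / l)) := by
  have harg : ∀ x, (a - x / βbar + R) / l = (a + R) / l - x / (l * βbar) := fun x => by
    field_simp
    ring
  have hK : Δt * c.toNNReal / (l * βbar) ≤ 1 := by
    rw [div_le_one (by positivity), Real.coe_toNNReal', mul_max_of_nonneg _ _ hΔt.le, mul_zero]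
    exact max_le hstab (by positivity)
  simp only [harg]
  exact monotone_add_of_lipschitzWith_le_one
    (hd_lip.const_mul_comp_sub_div hΔt.le (by positivity) _) (Real.toNNReal_le_one.2 hK)

/-- **Key scalar monotonicity computation (demand side), case (iii) of the proof of
Lemma 2.**  Let `d : ℝ → ℝ` be nondecreasing and Lipschitz with constant `c ≥ 0`,
let `l > 0`, `β̄ ∈ (0,1]`, `Δt > 0` satisfy `Δt·c ≤ l·β̄`.  Then for any fixed
`a, R ∈ ℝ`, the function `x ↦ x + Δt·d((a − x/β̄ + R)/l)` is nondecreasing on `ℝ`. -/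
theorem demand_update_monotone (d : ℝ → ℝ) (c l βbar Δt a R : ℝ)
    (hc : 0 ≤ c)
    (hd_mono : Monotone d)
    (hd_lip : LipschitzWith c.toNNReal d)
    (hl : 0 < l) (hβbar0 : 0 < βbar) (hβbar1 : βbar ≤ 1) (hΔt : 0 < Δt)
    (hstab : Δt * c ≤ l * βbar) :
    Monotone (fun x : ℝ => x + Δt * d ((a - x / βbar + R) / l)) :=
  demand_update_monotone_general d c l βbar Δt a R hd_lip hl hβbar0 hΔt hstab
end

section
/- (Lemma 2: monotonicity of the CCTM in the cumulative flows.) For a monotonic CTM, fix an input vector R ∈ ℝ^n and define, for Φ ∈ ℝ^{n+1} (components Φ_0, …, Φ_n), the densities ρ_k := (1/l_k)(Φ_{k−1} − Φ_k/β̄_k + R_k) for k ∈ {1,…,n}, the flows φ_k := min{d_k(ρ_k), s_{k+1}(ρ_{k+1})} for 1 ≤ k ≤ n−1, φ_n := d_n(ρ_n), and φ_0 := w_0 (a constant), and the update maps f_k(Φ, R) := Φ_k + Δt·φ_k for k ∈ {0,…,n}. Then each f_k is nondecreasing in Φ: if Φ ≤ Φ′ componentwise, then f_k(Φ, R) ≤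 f_k(Φ′, R) for every k ∈ {0,…,n}. -/
open Finset NNReal

/-- A **monotonic Cell Transmission Model** (CTM) of a freeway with `n` cells,
indexed by `k ∈ {1,…,n}` (index `0` refers to the upstream mainline boundary,
and the data attached to indices outside `{1,…,n}` is irrelevant junk).
The fields collect the parameters of the model: cell lengths `l k > 0`,
offramp split ratios `β k ∈ [0,1)`, sampling time `Δt > 0`, jam densities
`ρjam k > 0`, critical densities `ρc k ∈ (0, ρjam k)`, nondecreasing Lipschitz
demand functions `d k` (vanishing for `ρ ≤ 0` and constant on `[ρc k, ∞)`),
nonincreasing Lipschitz supply functions `s k` (constant on `(-∞, ρc k]` and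
vanishing on `[ρjam k, ∞)`), together with Assumption 1 of the paper:
`Δt·cd k ≤ l k·(1 − β k)` and `Δt·cs k ≤ l k`. -/
structure CTM (n : ℕ) where
  /-- cell lengths -/
  l : ℕ → ℝ
  /-- offramp split ratios -/
  β : ℕ → ℝ
  /-- sampling time -/
  Δt : ℝ
  /-- jam densities -/
  ρjam : ℕ → ℝ
  /-- critical densities -/
  ρc : ℕ → ℝ
  /-- demand functions of the fundamental diagram -/
  d : ℕ → ℝ → ℝ
  /-- supply functions of the fundamental diagram -/
  s : ℕ → ℝ → ℝ
  /-- Lipschitz constants of the demand functions -/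
  cd : ℕ → ℝ≥0
  /-- Lipschitz constants of the supply functions -/
  cs : ℕ → ℝ≥0
  hl : ∀ k, 0 < l k
  hβ : ∀ k, 0 ≤ β k ∧ β k < 1
  hΔt : 0 < Δt
  hρjam : ∀ k, 0 < ρjam k
  hρc : ∀ k, 0 < ρc k ∧ ρc k < ρjam k
  hd_nonneg : ∀ k x, 0 ≤ d k x
  hd_mono : ∀ k, Monotone (d k)
  hd_lip : ∀ k, LipschitzWith (cd k) (d k)
  hd_zero : ∀ k x, x ≤ 0 → d k x = 0
  hd_const : ∀ k x, ρc k ≤ x → d k x = d k (ρc k)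
  hs_nonneg : ∀ k x, 0 ≤ s k x
  hs_anti : ∀ k, Antitone (s k)
  hs_lip : ∀ k, LipschitzWith (cs k) (s k)
  hs_const : ∀ k x, x ≤ ρc k → s k x = s k (ρc k)
  hs_zero : ∀ k x, ρjam k ≤ x → s k x = 0
  /-- Assumption 1, demand part: `Δt·cd k ≤ l k·β̄ k`. -/
  assumption1_d : ∀ k, Δt * (cd k : ℝ) ≤ l k * (1 - β k)
  /-- Assumption 1, supply part: `Δt·cs k ≤ l k`. -/
  assumption1_s : ∀ k, Δt * (cs k : ℝ) ≤ l k

namespace CTM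

variable {n : ℕ}

/-- Complement `β̄ k := 1 − β k` of the split ratio. -/
def βbar (M : CTM n) (k : ℕ) : ℝ := 1 - M.β k

/-- Mainline flows as functions of the densities: `φ_0 = w_0` (external upstream
demand), `φ_k = min{d_k(ρ_k), s_{k+1}(ρ_{k+1})}` for `1 ≤ k ≤ n−1`, and
`φ_n = d_n(ρ_n)`. -/
noncomputable def flow (M : CTM n) (w0 : ℝ) (ρ : ℕ → ℝ) (k : ℕ) : ℝ :=
  if k = 0 then w0
  else if k < n then min (M.d k (ρ k)) (M.s (k + 1) (ρ (k + 1)))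
  else M.d n (ρ n)

/-- Interface capacities: `F_k = min{d_k(ρ_k^c), s_{k+1}(ρ_{k+1}^c)}` for
`k ≤ n−1` and `F_n = d_n(ρ_n^c)`. -/
noncomputable def F (M : CTM n) (k : ℕ) : ℝ :=
  if k < n then min (M.d k (M.ρc k)) (M.s (k + 1) (M.ρc (k + 1)))
  else M.d n (M.ρc n)

/-- Saturation `[x]ᵘₗ := min{u, max{x, l}}`. -/
noncomputable def sat (x lo hi : ℝ) : ℝ := min hi (max x lo)

/-- The best-effort metering rate
`r*_k = [ (l_k/Δt)(ρ_k^c − ρ_k) + φ_k/β̄_k − φ_{k−1} ]` saturated to the interval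
`[max{0, (q_k − q̄_k)/Δt + w_k}, min{r̄_k, q_k/Δt + w_k}]`. -/
noncomputable def beRate (M : CTM n) (w0 : ℝ) (ρ q w rbar qbar : ℕ → ℝ) (k : ℕ) : ℝ :=
  sat (M.l k / M.Δt * (M.ρc k - ρ k) + M.flow w0 ρ k / M.βbar k - M.flow w0 ρ (k - 1))
      (max 0 ((q k - qbar k) / M.Δt + w k))
      (min (rbar k) (q k / M.Δt + w k))

/-- One step of the density conservation law:
`ρ_k(t+1) = ρ_k(t) + (Δt/l_k)(φ_{k−1}(t) + r_k(t) − φ_k(t)/β̄_k)`. -/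
noncomputable def ρnext (M : CTM n) (w0 : ℝ) (ρ r : ℕ → ℝ) (k : ℕ) : ℝ :=
  ρ k + M.Δt / M.l k * (M.flow w0 ρ (k - 1) + r k - M.flow w0 ρ k / M.βbar k)

/-- Cell `k` is **restrictive** (Definition 1) if either (i) the onramp is not
full and the inflow is limited by non-maximal supply, or (ii) the onramp is
nonempty and the outflow is limited by non-maximal demand. -/
noncomputable def Restrictive (M : CTM n) (w0 : ℝ) (ρ q qbar : ℕ → ℝ) (k : ℕ) : Prop :=
  (q k < qbar k ∧ M.flow w0 ρ (k - 1) = M.s k (ρ k) ∧ M.s k (ρ k) < M.F (k - 1)) ∨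
  (0 < q k ∧ M.flow w0 ρ k = M.d k (ρ k) ∧ M.d k (ρ k) < M.F k)

/-- Densities recovered from the cumulative state of the CCTM:
`ρ_k = (Φ_{k−1} − Φ_k/β̄_k + R_k)/l_k`. -/
noncomputable def ρof (M : CTM n) (Φ R : ℕ → ℝ) (k : ℕ) : ℝ :=
  (Φ (k - 1) - Φ k / M.βbar k + R k) / M.l k

/-- The CCTM update maps `f_k(Φ, R) := Φ_k + Δt·φ_k`. -/
noncomputable def f (M : CTM n) (w0 : ℝ) (Φ R : ℕ → ℝ) (k : ℕ) : ℝ :=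
  Φ k + M.Δt * M.flow w0 (M.ρof Φ R) k

/-- `Traj M w ρ q r` states that the densities `ρ`, queues `q` obey the CTM
conservation laws under the metering rates `r` and external demands `w`
(`w t 0` is the upstream mainline demand, `w t k` the onramp demand at cell `k`). -/
noncomputable def Traj (M : CTM n) (w : ℕ → ℕ → ℝ) (ρ q r : ℕ → ℕ → ℝ) : Prop :=
  ∀ t k, 1 ≤ k → k ≤ n →
    ρ (t + 1) k = M.ρnext (w t 0) (ρ t) (r t) k ∧
    q (t + 1) k = q t k + M.Δt * (w t k - r t k)

/-- Total Time Spent `TTS = Δt · Σ_{t=0}^{T} Σ_{k=1}^{n} (l_k ρ_k(t) + q_k(t))`. -/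
noncomputable def TTS (M : CTM n) (T : ℕ) (ρ q : ℕ → ℕ → ℝ) : ℝ :=
  M.Δt * ∑ t ∈ Finset.range (T + 1), ∑ k ∈ Finset.Icc 1 n, (M.l k * ρ t k + q t k)

end CTM

private lemma lip_sub_le' {c : ℝ≥0} {f : ℝ → ℝ} (hf : LipschitzWith c f) (x y : ℝ) :
    f x - f y ≤ (c : ℝ) * |x - y| := by
  have h := hf.dist_le_mul x y
  rw [Real.dist_eq, Real.dist_eq] at h
  exact (le_abs_self _).trans h

/-- **Lemma 2 (monotonicity of the CCTM in the cumulative flows).**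
For a monotonic CTM with a fixed input vector `R`, each CCTM update map
`f_k(Φ, R) = Φ_k + Δt·φ_k` is nondecreasing in the cumulative flow state `Φ`:
if `Φ ≤ Φ'` componentwise, then `f_k(Φ, R) ≤ f_k(Φ', R)` for every `k ∈ {0,…,n}`. -/
theorem cctm_monotone_in_flows {n : ℕ} (M : CTM n) (w0 : ℝ) (R : ℕ → ℝ)
    (Φ Φ' : ℕ → ℝ) (hΦ : ∀ k, k ≤ n → Φ k ≤ Φ' k) :
    ∀ k, k ≤ n → M.f w0 Φ R k ≤ M.f w0 Φ' R k := by
  have hΔt := M.hΔt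
  -- Demand part
  have hdem : ∀ j, 1 ≤ j → j ≤ n →
      Φ j + M.Δt * M.d j (M.ρof Φ R j) ≤ Φ' j + M.Δt * M.d j (M.ρof Φ' R j) := by
    intro j hj1 hjn
    have hβ := (M.hβ j).2
    have hβb : 0 < M.βbar j := by unfold CTM.βbar; linarith
    have hl := M.hl j
    have hprev : Φ (j - 1) ≤ Φ' (j - 1) := hΦ (j - 1) (le_trans (Nat.sub_le j 1) hjn)
    have hΔ : 0 ≤ Φ' j - Φ j := sub_nonneg.mpr (hΦ j hjn)
    set δ := (Φ' j - Φ j) / (M.βbar j * M.l j) with hδdef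
    have hδ : 0 ≤ δ := div_nonneg hΔ (mul_pos hβb hl).le
    have hρ : M.ρof Φ R j - δ ≤ M.ρof Φ' R j := by
      have key : M.ρof Φ R j - δ = (Φ (j - 1) - Φ' j / M.βbar j + R j) / M.l j := by
        unfold CTM.ρof
        rw [hδdef]
        field_simp
        ring
      rw [key, CTM.ρof]
      gcongr
    have hmono := M.hd_mono j hρ
    have hlip : M.d j (M.ρof Φ R j) - M.d j (M.ρof Φ R j - δ) ≤ (M.cd j : ℝ) * δ := by
      have h := lip_sub_le' (M.hd_lip j) (M.ρof Φ R j) (M.ρof Φ R j - δ)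
      rwa [sub_sub_cancel, abs_of_nonneg hδ] at h
    have h1 : M.Δt * (M.cd j : ℝ) ≤ M.βbar j * M.l j := by
      have h2 := M.assumption1_d j
      unfold CTM.βbar
      nlinarith
    have heq : (M.βbar j * M.l j) * δ = Φ' j - Φ j := by
      rw [hδdef, mul_comm, div_mul_cancel₀ _ (ne_of_gt (mul_pos hβb hl))]
    have hbound : M.Δt * ((M.cd j : ℝ) * δ) ≤ Φ' j - Φ j := by
      calc M.Δt * ((M.cd j : ℝ) * δ) = (M.Δt * (M.cd j : ℝ)) * δ := by ring
        _ ≤ (M.βbar j * M.l j) * δ := mul_le_mul_of_nonneg_right h1 hδ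
        _ = Φ' j - Φ j := heq
    have hd : M.d j (M.ρof Φ R j) ≤ M.d j (M.ρof Φ' R j) + (M.cd j : ℝ) * δ := by
      linarith
    nlinarith [mul_le_mul_of_nonneg_left hd hΔt.le]
  -- Supply part
  have hsup : ∀ j, j + 1 ≤ n →
      Φ j + M.Δt * M.s (j + 1) (M.ρof Φ R (j + 1)) ≤
        Φ' j + M.Δt * M.s (j + 1) (M.ρof Φ' R (j + 1)) := by
    intro j hjn
    have hβ := (M.hβ (j + 1)).2
    have hβb : 0 < M.βbar (j + 1) := by unfold CTM.βbar; linarith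
    have hl := M.hl (j + 1)
    have hnext : Φ (j + 1) ≤ Φ' (j + 1) := hΦ (j + 1) hjn
    have hΔ : 0 ≤ Φ' j - Φ j := sub_nonneg.mpr (hΦ j (le_trans (Nat.le_succ j) hjn))
    set δ := (Φ' j - Φ j) / M.l (j + 1) with hδdef
    have hδ : 0 ≤ δ := div_nonneg hΔ hl.le
    have hidx : (j + 1) - 1 = j := by omega
    have hρ : M.ρof Φ' R (j + 1) ≤ M.ρof Φ R (j + 1) + δ := by
      have key : M.ρof Φ R (j + 1) + δ
          = (Φ' j - Φ (j + 1) / M.βbar (j + 1) + R (j + 1)) / M.l (j + 1) := by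
        unfold CTM.ρof
        rw [hidx, hδdef]
        field_simp
        ring
      rw [key, CTM.ρof, hidx]
      gcongr
    have hmono := M.hs_anti (j + 1) hρ
    have hlip : M.s (j + 1) (M.ρof Φ R (j + 1)) - M.s (j + 1) (M.ρof Φ R (j + 1) + δ)
        ≤ (M.cs (j + 1) : ℝ) * δ := by
      have h := lip_sub_le' (M.hs_lip (j + 1)) (M.ρof Φ R (j + 1)) (M.ρof Φ R (j + 1) + δ)
      rwa [sub_add_cancel_left, abs_neg, abs_of_nonneg hδ] at h
    have h1 : M.Δt * (M.cs (j + 1) : ℝ) ≤ M.l (j + 1) := M.assumption1_s (j + 1)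
    have heq : M.l (j + 1) * δ = Φ' j - Φ j := by
      rw [hδdef, mul_comm, div_mul_cancel₀ _ (ne_of_gt hl)]
    have hbound : M.Δt * ((M.cs (j + 1) : ℝ) * δ) ≤ Φ' j - Φ j := by
      calc M.Δt * ((M.cs (j + 1) : ℝ) * δ) = (M.Δt * (M.cs (j + 1) : ℝ)) * δ := by ring
        _ ≤ M.l (j + 1) * δ := mul_le_mul_of_nonneg_right h1 hδ
        _ = Φ' j - Φ j := heq
    have hs : M.s (j + 1) (M.ρof Φ R (j + 1))
        ≤ M.s (j + 1) (M.ρof Φ' R (j + 1)) + (M.cs (j + 1) : ℝ) * δ := by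
      linarith
    nlinarith [mul_le_mul_of_nonneg_left hs hΔt.le]
  -- Assembly
  intro k hk
  by_cases h0 : k = 0
  · subst h0
    simp only [CTM.f, CTM.flow, if_pos rfl, if_true]
    have := hΦ 0 (Nat.zero_le n)
    linarith
  · have hk1 : 1 ≤ k := Nat.one_le_iff_ne_zero.mpr h0
    by_cases hkn : k < n
    · have ha := hdem k hk1 hk
      have hb := hsup k hkn
      simp only [CTM.f, CTM.flow, if_neg h0, if_pos hkn]
      rcases le_total (M.d k (M.ρof Φ' R k)) (M.s (k + 1) (M.ρof Φ' R (k + 1))) with h | h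
      · rw [min_eq_left h]
        have hm : min (M.d k (M.ρof Φ R k)) (M.s (k + 1) (M.ρof Φ R (k + 1)))
            ≤ M.d k (M.ρof Φ R k) := min_le_left _ _
        have := mul_le_mul_of_nonneg_left hm hΔt.le
        linarith
      · rw [min_eq_right h]
        have hm : min (M.d k (M.ρof Φ R k)) (M.s (k + 1) (M.ρof Φ R (k + 1)))
            ≤ M.s (k + 1) (M.ρof Φ R (k + 1)) := min_le_right _ _
        have := mul_le_mul_of_nonneg_left hm hΔt.le
        linarith
    · have hkeq : k = n := le_antisymm hk (not_lt.mp hkn)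
      subst hkeq
      simp only [CTM.f, CTM.flow, if_neg h0, if_neg hkn]
      exact hdem k hk1 hk
end

section
/- (Demand-maximization property of the best-effort rate, part of the proof of Lemma 1.) Fix a monotonic CTM, a time t, a state with ρ_k(t) ∈ [0, ρ̄_k] and 0 ≤ q_k(t) ≤ q̄_k for all k, and external demands 0 ≤ w_k(t) ≤ r̄_k. Fix a cell k ∈ {1,…,n}. For a metering rate r at cell k, let ρ_k^r(t+1) := ρ_k(t) + (Δt/l_k)(φ_{k−1}(t) + r − φ_k(t)/β̄_k). Then the best-effort rate r*_k(t) maximizes the next-step demand over all feasible rates: for every r with max{0, (q_k(t) − q̄_k)/Δt + w_k(t)} ≤ r ≤ min{r̄_k, q_k(t)/Δt + w_k(t)}, one has d_k(ρ_k^r(t+1)) ≤ d_k(ρ_k^{r*_k(t)}(t+1)). -/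
open Finset NNReal

/-- **Demand-maximization property of the best-effort rate (part of the proof of
Lemma 1).**  Fix a monotonic CTM, a state with `ρ_j ∈ [0, ρ̄_j]` and
`q_j ∈ [0, q̄_j]` for all cells `j`, and external demands `0 ≤ w_j ≤ r̄_j`.
Fix a cell `k ∈ {1,…,n}`.  For a metering rate `r` at cell `k`, the next-step
density is `ρ_k^r(t+1) = ρ_k + (Δt/l_k)(φ_{k−1} + r − φ_k/β̄_k)`.  The best-effort
rate maximizes the next-step demand `d_k(ρ_k^r(t+1))` over all feasible rates
`r ∈ [max{0, (q_k − q̄_k)/Δt + w_k}, min{r̄_k, q_k/Δt + w_k}]`. -/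
theorem beRate_maximizes_demand {n : ℕ} (M : CTM n) (w0 : ℝ)
    (ρ q w rbar qbar : ℕ → ℝ)
    (hρ : ∀ j, 1 ≤ j → j ≤ n → ρ j ∈ Set.Icc 0 (M.ρjam j))
    (hq : ∀ j, 1 ≤ j → j ≤ n → q j ∈ Set.Icc 0 (qbar j))
    (hw : ∀ j, 1 ≤ j → j ≤ n → w j ∈ Set.Icc 0 (rbar j))
    (hrbar : ∀ j, 0 ≤ rbar j) (hqbar : ∀ j, 0 ≤ qbar j)
    (k : ℕ) (hk1 : 1 ≤ k) (hkn : k ≤ n)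
    (r : ℝ)
    (hr_lo : max 0 ((q k - qbar k) / M.Δt + w k) ≤ r)
    (hr_hi : r ≤ min (rbar k) (q k / M.Δt + w k)) :
    M.d k (M.ρnext w0 ρ (fun _ => r) k) ≤
      M.d k (M.ρnext w0 ρ (fun _ => M.beRate w0 ρ q w rbar qbar k) k) := by
  have hΔt := M.hΔt
  have hl := M.hl k
  have hcpos : 0 < M.Δt / M.l k := div_pos hΔt hl
  set A := M.flow w0 ρ (k - 1) with hA
  set B := M.flow w0 ρ k / M.βbar k with hB
  set x := M.l k / M.Δt * (M.ρc k - ρ k) + B - A with hx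
  set lo := max 0 ((q k - qbar k) / M.Δt + w k) with hlo
  set hi := min (rbar k) (q k / M.Δt + w k) with hhi
  have hrstar : M.beRate w0 ρ q w rbar qbar k = min hi (max x lo) := rfl
  have hnext : ∀ y : ℝ, M.ρnext w0 ρ (fun _ => y) k
      = ρ k + M.Δt / M.l k * (A + y - B) := fun y => rfl
  have hgx : ρ k + M.Δt / M.l k * (A + x - B) = M.ρc k := by
    rw [hx]; field_simp; ring
  have hdmax : ∀ y : ℝ, M.d k y ≤ M.d k (M.ρc k) := by
    intro y
    rcases le_total y (M.ρc k) with h | h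
    · exact M.hd_mono k h
    · rw [M.hd_const k y h]
  set rs := min hi (max x lo) with hrs
  rw [hrstar, hnext, hnext]
  rcases le_or_gt r rs with h | h
  · apply M.hd_mono
    have : A + r - B ≤ A + rs - B := by linarith
    nlinarith
  · -- r > rs, but r ≤ hi, so rs < hi hence rs = max x lo ≥ x
    have hrhi : r ≤ hi := hr_hi
    have hrs_lt : rs < hi := lt_of_lt_of_le h hrhi
    have hrs_eq : rs = max x lo := by
      rcases min_cases hi (max x lo) with ⟨h1, h2⟩ | ⟨h1, h2⟩
      · exact absurd (hrs ▸ h1 : rs = hi) (ne_of_lt hrs_lt)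
      · exact hrs ▸ h1
    have hxrs : x ≤ rs := hrs_eq ▸ le_max_left x lo
    have hge : M.ρc k ≤ ρ k + M.Δt / M.l k * (A + rs - B) := by
      rw [← hgx]
      have h2 := mul_le_mul_of_nonneg_left (show A + x - B ≤ A + rs - B by linarith) hcpos.le
      linarith
    rw [M.hd_const k _ hge]
    exact hdmax _
end

section
/- (Supply-maximization property of the best-effort rate, part of the proof of Lemma 1.) Fix a monotonic CTM, a time t, a state with ρ_j(t) ∈ [0, ρ̄_j] and 0 ≤ q_j(t) ≤ q̄_j for all j, and external demands 0 ≤ w_j(t) ≤ r̄_j. Fix a cell k with 1 ≤ k ≤ n−1. For a metering rate r at cell k+1, let ρ_{k+1}^r(t+1) := ρ_{k+1}(t) + (Δt/l_{k+1})(φ_k(t) + r − φ_{k+1}(t)/β̄_{k+1}). Then the best-effort rate r*_{k+1}(t) maximizes the next-step supply over all feasible rates: for every r with max{0, (q_{k+1}(t) − q̄_{k+1})/Δt + w_{k+1}(t)} ≤ r ≤ min{r̄_{k+1}, q_{k+1}(t)/Δt + w_{k+1}(t)}, one has s_{k+1}(ρ_{k+1}^r(t+1)) ≤ s_{k+1}(ρ_{k+1}^{r*_{k+1}(t)}(t+1)).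 -/
open Finset NNReal

/- The supply is maximal at every density `≤ ρc`, and the next density is an increasing
affine function of the rate, equal to `ρc` at the unsaturated rate `x`. Saturation gives
`r* ≤ max x lo`: either `r* ≤ x`, so the supply at `r*` is maximal, or `r* ≤ lo ≤ r`, so
the next density under `r*` is at most the one under `r`. -/

theorem Antitone.apply_le_apply_sat {β : Type*} [Preorder β] {g : ℝ → β} {x lo hi r : ℝ}
    (hg : Antitone g) (hmax : ∀ y, g y ≤ g x) (hr : lo ≤ r) :
    g r ≤ g (CTM.sat x lo hi) := by
  rcases le_max_iff.mp (min_le_right hi (max x lo) : CTM.sat x lo hi ≤ max x lo) with hx | hlo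
  · exact (hmax r).trans (hg hx)
  · exact hg (hlo.trans hr)

namespace CTM

variable {n : ℕ} (M : CTM n) (w0 : ℝ) (ρ : ℕ → ℝ) (k : ℕ)

/-- The unsaturated best-effort rate. -/
noncomputable def criticalRate : ℝ :=
  M.l k / M.Δt * (M.ρc k - ρ k) + M.flow w0 ρ k / M.βbar k - M.flow w0 ρ (k - 1)

theorem beRate_eq_sat (q w rbar qbar : ℕ → ℝ) :
    M.beRate w0 ρ q w rbar qbar k =
      sat (M.criticalRate w0 ρ k) (max 0 ((q k - qbar k) / M.Δt + w k))
        (min (rbar k) (q k / M.Δt + w k)) :=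
  rfl

theorem βbar_pos : 0 < M.βbar k := sub_pos.mpr (M.hβ k).2

theorem ρnext_eq_ρc_add (r : ℕ → ℝ) :
    M.ρnext w0 ρ r k = M.ρc k + M.Δt / M.l k * (r k - M.criticalRate w0 ρ k) := by
  have hl := (M.hl k).ne'
  have hΔt := M.hΔt.ne'
  have hβ := (M.βbar_pos k).ne'
  simp only [ρnext, criticalRate]
  field_simp
  ring

theorem s_le_s_ρc (y : ℝ) : M.s k y ≤ M.s k (M.ρc k) := by
  rcases le_or_gt y (M.ρc k) with hy | hy
  · exact (M.hs_const k y hy).le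
  · exact M.hs_anti k hy.le

theorem antitone_s_ρnext : Antitone fun r : ℝ => M.s k (M.ρnext w0 ρ (fun _ => r) k) := by
  intro r r' hrr'
  simp only [ρnext_eq_ρc_add]
  have hc : 0 < M.Δt / M.l k := div_pos M.hΔt (M.hl k)
  exact M.hs_anti k (by gcongr)

theorem s_ρnext_le_s_ρnext_criticalRate (r : ℝ) :
    M.s k (M.ρnext w0 ρ (fun _ => r) k) ≤
      M.s k (M.ρnext w0 ρ (fun _ => M.criticalRate w0 ρ k) k) := by
  rw [ρnext_eq_ρc_add M w0 ρ k (fun _ => M.criticalRate w0 ρ k), sub_self, mul_zero, add_zero]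
  exact M.s_le_s_ρc k _

end CTM

theorem beRate_maximizes_supply_general {n : ℕ} (M : CTM n) (w0 : ℝ)
    (ρ q w rbar qbar : ℕ → ℝ)
    (k : ℕ)
    (r : ℝ)
    (hr_lo : max 0 ((q (k + 1) - qbar (k + 1)) / M.Δt + w (k + 1)) ≤ r) :
    M.s (k + 1) (M.ρnext w0 ρ (fun _ => r) (k + 1)) ≤
      M.s (k + 1) (M.ρnext w0 ρ (fun _ => M.beRate w0 ρ q w rbar qbar (k + 1)) (k + 1)) := by
  rw [M.beRate_eq_sat]
  exact (M.antitone_s_ρnext w0 ρ (k + 1)).apply_le_apply_sat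
    (M.s_ρnext_le_s_ρnext_criticalRate w0 ρ (k + 1)) hr_lo

/-- **Supply-maximization property of the best-effort rate (part of the proof of
Lemma 1).**  Fix a monotonic CTM, a state with `ρ_j ∈ [0, ρ̄_j]` and
`q_j ∈ [0, q̄_j]` for all cells `j`, and external demands `0 ≤ w_j ≤ r̄_j`.
Fix a cell `k` with `1 ≤ k ≤ n−1`.  For a metering rate `r` at cell `k+1`, the
next-step density is `ρ_{k+1}^r(t+1) = ρ_{k+1} + (Δt/l_{k+1})(φ_k + r − φ_{k+1}/β̄_{k+1})`.
The best-effort rate maximizes the next-step supply `s_{k+1}(ρ_{k+1}^r(t+1))` over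
all feasible rates
`r ∈ [max{0, (q_{k+1} − q̄_{k+1})/Δt + w_{k+1}}, min{r̄_{k+1}, q_{k+1}/Δt + w_{k+1}}]`. -/
theorem beRate_maximizes_supply {n : ℕ} (M : CTM n) (w0 : ℝ)
    (ρ q w rbar qbar : ℕ → ℝ)
    (hρ : ∀ j, 1 ≤ j → j ≤ n → ρ j ∈ Set.Icc 0 (M.ρjam j))
    (hq : ∀ j, 1 ≤ j → j ≤ n → q j ∈ Set.Icc 0 (qbar j))
    (hw : ∀ j, 1 ≤ j → j ≤ n → w j ∈ Set.Icc 0 (rbar j))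
    (hrbar : ∀ j, 0 ≤ rbar j) (hqbar : ∀ j, 0 ≤ qbar j)
    (k : ℕ) (hk1 : 1 ≤ k) (hkn : k ≤ n - 1)
    (r : ℝ)
    (hr_lo : max 0 ((q (k + 1) - qbar (k + 1)) / M.Δt + w (k + 1)) ≤ r)
    (hr_hi : r ≤ min (rbar (k + 1)) (q (k + 1) / M.Δt + w (k + 1))) :
    M.s (k + 1) (M.ρnext w0 ρ (fun _ => r) (k + 1)) ≤
      M.s (k + 1) (M.ρnext w0 ρ (fun _ => M.beRate w0 ρ q w rbar qbar (k + 1)) (k + 1)) :=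
  beRate_maximizes_supply_general M w0 ρ q w rbar qbar k r hr_lo
end

section
/- (Lemma 1.) Fix a monotonic CTM, a time t, a state with ρ_k(t) ∈ [0, ρ̄_k] and 0 ≤ q_k(t) ≤ q̄_k for all k, external demands 0 ≤ w_k(t) ≤ r̄_k, and a given next-step upstream demand w_0(t+1) ≥ 0. Then the best-effort metering vector r*(t) = (r*_1(t), …, r*_n(t)) solves the one-step-ahead flow maximization problem: for every feasible metering vector r(t) (i.e., max{0, (q_k(t) − q̄_k)/Δt + w_k(t)} ≤ r_k(t) ≤ min{r̄_k, q_k(t)/Δt + w_k(t)} for all k), the resulting flows at time t+1 satisfy φ_k(t+1; r) ≤ φ_k(t+1; r*) simultaneously for every k ∈ {0,…,n}; in particular r* maximizes the Total Distance Traveled TDT(t+1) := Δt·Σ_{k=1}^n l_k·φ_k(t+1) over all feasible metering vectors. -/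
open Finset NNReal

/-- Abstract key lemma about the saturated best-effort rate. -/
lemma sat_key {d s : ℝ → ℝ} {ρc a c x lo hi rr : ℝ}
    (hc : 0 < c) (hx : a + c * x = ρc)
    (hdm : Monotone d) (hdc : ∀ y, ρc ≤ y → d y = d ρc)
    (hsa : Antitone s) (hsc : ∀ y, y ≤ ρc → s y = s ρc)
    (h1 : lo ≤ rr) (h2 : rr ≤ hi) :
    d (a + c * rr) ≤ d (a + c * min hi (max x lo)) ∧
    s (a + c * rr) ≤ s (a + c * min hi (max x lo)) := by
  have hd_all : ∀ y, d y ≤ d ρc := fun y => by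
    rcases le_total y ρc with h | h
    · exact hdm h
    · rw [hdc y h]
  have hs_all : ∀ y, s y ≤ s ρc := fun y => by
    rcases le_total y ρc with h | h
    · rw [hsc y h]
    · exact hsa h
  rcases lt_or_ge hi x with hbx | hxb
  · have hmm : min hi (max x lo) = hi := by
      rw [max_eq_left (h1.trans (h2.trans hbx.le))]; exact min_eq_left hbx.le
    rw [hmm]
    have hle : a + c * hi ≤ ρc := by nlinarith
    refine ⟨hdm (by nlinarith), ?_⟩
    rw [hsc (a + c * hi) hle]; exact hs_all _
  rcases lt_or_ge x lo with hbl | hlb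
  · have hmm : min hi (max x lo) = lo := by
      rw [max_eq_right hbl.le]; exact min_eq_right (h1.trans h2)
    rw [hmm]
    have hle : ρc ≤ a + c * lo := by nlinarith
    refine ⟨?_, hsa (by nlinarith)⟩
    rw [hdc (a + c * lo) hle]; exact hd_all _
  · have hmm : min hi (max x lo) = x := by
      rw [max_eq_left hlb]; exact min_eq_right hxb
    rw [hmm, hx]
    exact ⟨hd_all _, hs_all _⟩

/-- **Lemma 1.**  Fix a monotonic CTM, a state with `ρ_k ∈ [0, ρ̄_k]` and
`q_k ∈ [0, q̄_k]` for all cells `k`, external demands `0 ≤ w_k ≤ r̄_k`, and a given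
next-step upstream demand `w_0(t+1) = w0' ≥ 0`.  Then the best-effort metering
vector `r*` solves the one-step-ahead flow maximization problem: for every
feasible metering vector `r` (i.e.
`max{0, (q_k − q̄_k)/Δt + w_k} ≤ r_k ≤ min{r̄_k, q_k/Δt + w_k}` for all `k`), the
resulting flows at time `t+1` satisfy `φ_k(t+1; r) ≤ φ_k(t+1; r*)` simultaneously
for every `k ∈ {0,…,n}`; in particular `r*` maximizes the Total Distance Traveled
`TDT(t+1) = Δt·Σ_{k=1}^{n} l_k·φ_k(t+1)`. -/
theorem beRate_solves_one_step_problem {n : ℕ} (M : CTM n) (w0 w0' : ℝ)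
    (hw0' : 0 ≤ w0')
    (ρ q w rbar qbar : ℕ → ℝ)
    (hρ : ∀ k, 1 ≤ k → k ≤ n → ρ k ∈ Set.Icc 0 (M.ρjam k))
    (hq : ∀ k, 1 ≤ k → k ≤ n → q k ∈ Set.Icc 0 (qbar k))
    (hw : ∀ k, 1 ≤ k → k ≤ n → w k ∈ Set.Icc 0 (rbar k))
    (hrbar : ∀ k, 0 ≤ rbar k) (hqbar : ∀ k, 0 ≤ qbar k)
    (r : ℕ → ℝ)
    (hfeas : ∀ k, 1 ≤ k → k ≤ n →
      max 0 ((q k - qbar k) / M.Δt + w k) ≤ r k ∧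
      r k ≤ min (rbar k) (q k / M.Δt + w k)) :
    (∀ k, k ≤ n →
      M.flow w0' (M.ρnext w0 ρ r) k ≤
        M.flow w0' (M.ρnext w0 ρ (M.beRate w0 ρ q w rbar qbar)) k) ∧
    M.Δt * ∑ k ∈ Finset.Icc 1 n, M.l k * M.flow w0' (M.ρnext w0 ρ r) k ≤
      M.Δt * ∑ k ∈ Finset.Icc 1 n,
        M.l k * M.flow w0' (M.ρnext w0 ρ (M.beRate w0 ρ q w rbar qbar)) k := by
  set rstar := M.beRate w0 ρ q w rbar qbar with hrstar
  have hkey : ∀ j, 1 ≤ j → j ≤ n →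
      M.d j (M.ρnext w0 ρ r j) ≤ M.d j (M.ρnext w0 ρ rstar j) ∧
      M.s j (M.ρnext w0 ρ r j) ≤ M.s j (M.ρnext w0 ρ rstar j) := by
    intro j h1 h2
    have hlj := M.hl j
    have hΔ := M.hΔt
    have hc : 0 < M.Δt / M.l j := div_pos hΔ hlj
    have hx : (ρ j + M.Δt / M.l j * (M.flow w0 ρ (j - 1) - M.flow w0 ρ j / M.βbar j))
        + M.Δt / M.l j * (M.l j / M.Δt * (M.ρc j - ρ j)
          + M.flow w0 ρ j / M.βbar j - M.flow w0 ρ (j - 1)) = M.ρc j := by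
      field_simp
      ring
    have hmain := sat_key (d := M.d j) (s := M.s j) hc hx (M.hd_mono j)
      (fun y hy => M.hd_const j y hy) (M.hs_anti j) (fun y hy => M.hs_const j y hy)
      (hfeas j h1 h2).1 (hfeas j h1 h2).2
    have e1 : M.ρnext w0 ρ r j
        = (ρ j + M.Δt / M.l j * (M.flow w0 ρ (j - 1) - M.flow w0 ρ j / M.βbar j))
          + M.Δt / M.l j * r j := by
      unfold CTM.ρnext; ring
    have hstar : rstar j = min (min (rbar j) (q j / M.Δt + w j))
        (max (M.l j / M.Δt * (M.ρc j - ρ j)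
          + M.flow w0 ρ j / M.βbar j - M.flow w0 ρ (j - 1))
          (max 0 ((q j - qbar j) / M.Δt + w j))) := by
      rw [hrstar]; rfl
    have e2 : M.ρnext w0 ρ rstar j
        = (ρ j + M.Δt / M.l j * (M.flow w0 ρ (j - 1) - M.flow w0 ρ j / M.βbar j))
          + M.Δt / M.l j * min (min (rbar j) (q j / M.Δt + w j))
            (max (M.l j / M.Δt * (M.ρc j - ρ j)
              + M.flow w0 ρ j / M.βbar j - M.flow w0 ρ (j - 1))
              (max 0 ((q j - qbar j) / M.Δt + w j))) := by
      unfold CTM.ρnext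
      rw [hstar]; ring
    rw [e1, e2]
    exact hmain
  have hflow : ∀ k, k ≤ n →
      M.flow w0' (M.ρnext w0 ρ r) k ≤ M.flow w0' (M.ρnext w0 ρ rstar) k := by
    intro k hk
    by_cases h0 : k = 0
    · simp [CTM.flow, h0]
    · have hk1 : 1 ≤ k := Nat.one_le_iff_ne_zero.mpr h0
      by_cases hkn : k < n
      · simp only [CTM.flow, h0, if_false, hkn, if_true]
        exact min_le_min ((hkey k hk1 hkn.le).1)
          ((hkey (k + 1) (by omega) (by omega)).2)
      · have hkeq : k = n := le_antisymm hk (not_lt.mp hkn)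
        subst hkeq
        simp only [CTM.flow, h0, if_false, hkn, if_true]
        exact (hkey k hk1 le_rfl).1
  refine ⟨hflow, ?_⟩
  apply mul_le_mul_of_nonneg_left _ M.hΔt.le
  apply Finset.sum_le_sum
  intro k hkmem
  rw [Finset.mem_Icc] at hkmem
  exact mul_le_mul_of_nonneg_left (hflow k hkmem.2) (M.hl k).le
end

section
/- (Key input-extremality step in the proof of Lemma 5.) For a monotonic CTM with CCTM update maps f_k(Φ, R) := Φ_k + Δt·φ_k, fix k with 1 ≤ k ≤ n−1, a state Φ ∈ ℝ^{n+1}, bounds q̄_j ≥ 0 and values W_j ∈ ℝ for all j, and an input vector R° with R°_k = W_k and R°_{k+1} = W_{k+1} − q̄_{k+1}. Then for every input vector R with W_j − q̄_j ≤ R_j ≤ W_j for all j and with R_j = R°_j for j ∉ {k, k+1}, one has f_k(Φ, R) ≤ f_k(Φ, R°). -/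
open Finset NNReal

/- The update `f_k` depends on the inputs only through `ρ_k`, which increases with `R_k`, and
`ρ_{k+1}`, which increases with `R_{k+1}`; since `φ_k = min{d_k(ρ_k), s_{k+1}(ρ_{k+1})}` with
`d_k` nondecreasing and `s_{k+1}` nonincreasing, `f_k` is largest when `R_k` is at its upper bound
`W_k` and `R_{k+1}` at its lower bound `W_{k+1} − q̄_{k+1}`. -/

namespace CTM

variable {n : ℕ} (M : CTM n)

theorem ρof_le_ρof (Φ : ℕ → ℝ) {R R' : ℕ → ℝ} {k : ℕ} (h : R k ≤ R' k) :
    M.ρof Φ R k ≤ M.ρof Φ R' k :=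
  div_le_div_of_nonneg_right (by linarith) (M.hl k).le

theorem flow_of_pos_of_lt (w0 : ℝ) (ρ : ℕ → ℝ) {k : ℕ} (hk0 : k ≠ 0) (hkn : k < n) :
    M.flow w0 ρ k = min (M.d k (ρ k)) (M.s (k + 1) (ρ (k + 1))) := by
  simp only [flow, hk0, hkn, if_false, if_true]

theorem flow_le_flow (w0 : ℝ) {ρ ρ' : ℕ → ℝ} {k : ℕ} (hk0 : k ≠ 0) (hkn : k < n)
    (hk : ρ k ≤ ρ' k) (hk1 : ρ' (k + 1) ≤ ρ (k + 1)) :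
    M.flow w0 ρ k ≤ M.flow w0 ρ' k := by
  rw [M.flow_of_pos_of_lt w0 ρ hk0 hkn, M.flow_of_pos_of_lt w0 ρ' hk0 hkn]
  exact min_le_min (M.hd_mono k hk) (M.hs_anti (k + 1) hk1)

theorem f_le_f (w0 : ℝ) (Φ : ℕ → ℝ) {R R' : ℕ → ℝ} {k : ℕ} (hk0 : k ≠ 0) (hkn : k < n)
    (hk : R k ≤ R' k) (hk1 : R' (k + 1) ≤ R (k + 1)) :
    M.f w0 Φ R k ≤ M.f w0 Φ R' k := by
  have hflow := M.flow_le_flow w0 hk0 hkn (M.ρof_le_ρof Φ hk) (M.ρof_le_ρof Φ hk1)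
  exact add_le_add_right (mul_le_mul_of_nonneg_left hflow M.hΔt.le) _

end CTM

theorem cctm_input_extremality_general {n : ℕ} (M : CTM n) (w0 : ℝ) (Φ : ℕ → ℝ)
    (W qbar : ℕ → ℝ)
    (k : ℕ) (hk1 : 1 ≤ k) (hkn : k ≤ n - 1)
    (R R' : ℕ → ℝ)
    (hR'k : R' k = W k)
    (hR'k1 : R' (k + 1) = W (k + 1) - qbar (k + 1))
    (hR : ∀ j, W j - qbar j ≤ R j ∧ R j ≤ W j) :
    M.f w0 Φ R k ≤ M.f w0 Φ R' k :=
  M.f_le_f w0 Φ (by omega) (by omega) (hR'k ▸ (hR k).2) (hR'k1 ▸ (hR (k + 1)).1)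

/-- **Key input-extremality step in the proof of Lemma 5.**  For a monotonic CTM
with CCTM update maps `f_k(Φ, R) = Φ_k + Δt·φ_k`, fix `1 ≤ k ≤ n−1`, a state `Φ`,
bounds `q̄_j ≥ 0` and values `W_j`, and an input vector `R'` with `R'_k = W_k` and
`R'_{k+1} = W_{k+1} − q̄_{k+1}`.  Then for every input vector `R` with
`W_j − q̄_j ≤ R_j ≤ W_j` for all `j` and `R_j = R'_j` for `j ∉ {k, k+1}`, one has
`f_k(Φ, R) ≤ f_k(Φ, R')`. -/
theorem cctm_input_extremality {n : ℕ} (M : CTM n) (w0 : ℝ) (Φ : ℕ → ℝ)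
    (W qbar : ℕ → ℝ) (hqbar : ∀ j, 0 ≤ qbar j)
    (k : ℕ) (hk1 : 1 ≤ k) (hkn : k ≤ n - 1)
    (R R' : ℕ → ℝ)
    (hR'k : R' k = W k)
    (hR'k1 : R' (k + 1) = W (k + 1) - qbar (k + 1))
    (hR : ∀ j, W j - qbar j ≤ R j ∧ R j ≤ W j)
    (hagree : ∀ j, j ≠ k → j ≠ k + 1 → R j = R' j) :
    M.f w0 Φ R k ≤ M.f w0 Φ R' k :=
  cctm_input_extremality_general M w0 Φ W qbar k hk1 hkn R R' hR'k hR'k1 hR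
end

section
/- (Lemma 5: one-step optimality propagation.) Consider a monotonic CTM in its cumulative (CCTM) formulation with fixed initial state Φ(0), R(0) = 0, cumulative external demands W_j(τ), and input constraints R_j(τ) ≤ R_j(τ+1) ≤ R_j(τ) + Δt·r̄_j and W_j(τ) − q̄_j ≤ R_j(τ) ≤ W_j(τ) for all j and τ. Define Φ*_k(t) as the maximum of Φ_k(t) over all CCTM trajectories satisfying these constraints. Let (Φ, R) be a feasible CCTM trajectory and fix a cell k and a time t such that Φ_j(t) = Φ*_j(t) for j ∈ {k−1, k, k+1} and cells k and k+1 are nonrestrictive at time t. Then Φ_k(t+1) = Φ*_k(t+1). -/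
open Finset NNReal

namespace CTM

/-- A trajectory `(Φ, R)` of the cumulative CTM (CCTM) is **feasible** for the
initial state `Φ0`, upstream demands `w0`, cumulative external onramp demands `W`,
maximal onramp flows `r̄` and queue capacities `q̄`, if it starts at `Φ0` with
`R(0) = 0`, obeys the CCTM dynamics `Φ(t+1) = f(Φ(t), R(t))`, and satisfies the
input constraints `R_j(τ) ≤ R_j(τ+1) ≤ R_j(τ) + Δt·r̄_j` and
`W_j(τ) − q̄_j ≤ R_j(τ) ≤ W_j(τ)`. -/
noncomputable def FeasibleCCTM {n : ℕ} (M : CTM n) (w0 : ℕ → ℝ) (W : ℕ → ℕ → ℝ)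
    (rbar qbar : ℕ → ℝ) (Φ0 : ℕ → ℝ) (Φ R : ℕ → ℕ → ℝ) : Prop :=
  (∀ k, k ≤ n → Φ 0 k = Φ0 k) ∧
  (∀ k, 1 ≤ k → k ≤ n → R 0 k = 0) ∧
  (∀ t k, k ≤ n → Φ (t + 1) k = M.f (w0 t) (Φ t) (R t) k) ∧
  (∀ t k, 1 ≤ k → k ≤ n →
    R t k ≤ R (t + 1) k ∧ R (t + 1) k ≤ R t k + M.Δt * rbar k) ∧
  (∀ t k, 1 ≤ k → k ≤ n → W t k - qbar k ≤ R t k ∧ R t k ≤ W t k)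

/-- `Φstar M w0 W rbar qbar Φ0 t k` is the maximal achievable cumulative flow
`Φ*_k(t)`, i.e. the supremum of `Φ_k(t)` over all feasible CCTM trajectories. -/
noncomputable def Φstar {n : ℕ} (M : CTM n) (w0 : ℕ → ℝ) (W : ℕ → ℕ → ℝ)
    (rbar qbar : ℕ → ℝ) (Φ0 : ℕ → ℝ) (t k : ℕ) : ℝ :=
  sSup {x : ℝ | ∃ Φ R : ℕ → ℕ → ℝ,
    M.FeasibleCCTM w0 W rbar qbar Φ0 Φ R ∧ x = Φ t k}

end CTM

namespace CTM

variable {n : ℕ} (M : CTM n)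

lemma aux_βbar_pos (k : ℕ) : 0 < M.βbar k := by
  have := M.hβ k; unfold βbar; linarith [this.2]

lemma aux_d_le (j : ℕ) (x : ℝ) : M.d j x ≤ M.d j (M.ρc j) := by
  rcases le_total x (M.ρc j) with h | h
  · exact M.hd_mono j h
  · exact le_of_eq (M.hd_const j x h)

lemma aux_s_le (j : ℕ) (x : ℝ) : M.s j x ≤ M.s j (M.ρc j) := by
  rcases le_total x (M.ρc j) with h | h
  · exact le_of_eq (M.hs_const j x h)
  · exact M.hs_anti j h

lemma aux_flow_le (w0 : ℝ) (ρ : ℕ → ℝ) (j : ℕ) (h1 : 1 ≤ j) (h2 : j ≤ n) :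
    M.flow w0 ρ j ≤ M.d j (M.ρc j) := by
  unfold flow
  rw [if_neg (by omega)]
  by_cases h : j < n
  · rw [if_pos h]; exact le_trans (min_le_left _ _) (M.aux_d_le j _)
  · rw [if_neg h]
    have hjn : j = n := by omega
    subst hjn
    exact M.aux_d_le _ _

lemma aux_phi_bound (w0 : ℕ → ℝ) (W : ℕ → ℕ → ℝ) (rbar qbar Φ0 : ℕ → ℝ)
    (Φ R : ℕ → ℕ → ℝ) (hf : M.FeasibleCCTM w0 W rbar qbar Φ0 Φ R) :
    ∀ τ j, j ≤ n → Φ τ j ≤ Φ0 j + M.Δt * ∑ σ ∈ Finset.range τ,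
      (if j = 0 then w0 σ else M.d j (M.ρc j)) := by
  intro τ
  induction τ with
  | zero => intro j hj; simp [hf.1 j hj]
  | succ τ ih =>
    intro j hj
    rw [hf.2.2.1 τ j hj]
    unfold f
    rw [Finset.sum_range_succ]
    have hflow : M.flow (w0 τ) (M.ρof (Φ τ) (R τ)) j ≤
        (if j = 0 then w0 τ else M.d j (M.ρc j)) := by
      by_cases h0 : j = 0
      · subst h0; simp [flow]
      · rw [if_neg h0]; exact M.aux_flow_le _ _ j (by omega) hj
    have h1 := ih j hj
    have h2 := mul_le_mul_of_nonneg_left hflow (le_of_lt M.hΔt)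
    have h3 : M.Δt * (∑ σ ∈ Finset.range τ, (if j = 0 then w0 σ else M.d j (M.ρc j))
        + (if j = 0 then w0 τ else M.d j (M.ρc j)))
        = M.Δt * ∑ σ ∈ Finset.range τ, (if j = 0 then w0 σ else M.d j (M.ρc j))
        + M.Δt * (if j = 0 then w0 τ else M.d j (M.ρc j)) := by ring
    rw [h3]
    linarith

lemma aux_bddAbove (w0 : ℕ → ℝ) (W : ℕ → ℕ → ℝ) (rbar qbar Φ0 : ℕ → ℝ)
    (τ j : ℕ) (hj : j ≤ n) :
    BddAbove {x : ℝ | ∃ Φ R : ℕ → ℕ → ℝ,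
      M.FeasibleCCTM w0 W rbar qbar Φ0 Φ R ∧ x = Φ τ j} := by
  refine ⟨Φ0 j + M.Δt * ∑ σ ∈ Finset.range τ,
      (if j = 0 then w0 σ else M.d j (M.ρc j)), ?_⟩
  rintro x ⟨Φ', R', hf', rfl⟩
  exact M.aux_phi_bound w0 W rbar qbar Φ0 Φ' R' hf' τ j hj

lemma aux_d_step (k : ℕ) {a A b B r RW : ℝ} (ha : a ≤ A) (hb : b ≤ B) (hr : r ≤ RW) :
    b + M.Δt * M.d k ((a - b / M.βbar k + r) / M.l k) ≤
    B + M.Δt * M.d k ((A - B / M.βbar k + RW) / M.l k) := by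
  have hβ : 0 < M.βbar k := M.aux_βbar_pos k
  have hl : 0 < M.l k := M.hl k
  set x1 := (a - b / M.βbar k + r) / M.l k with hx1
  set x2 := (a - B / M.βbar k + r) / M.l k with hx2
  set x3 := (A - B / M.βbar k + RW) / M.l k with hx3
  have hδ : x1 - x2 = (B - b) / (M.βbar k * M.l k) := by
    rw [hx1, hx2]; field_simp; try ring
  have hδ0 : 0 ≤ x1 - x2 := by
    rw [hδ]; apply div_nonneg (by linarith) (by positivity)
  have hx23 : x2 ≤ x3 := by
    apply div_le_div_of_nonneg_right (by linarith) hl.le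
  have hlip := (M.hd_lip k).dist_le_mul x1 x2
  rw [Real.dist_eq, Real.dist_eq] at hlip
  have hkey : M.d k x1 - M.d k x2 ≤ (M.cd k : ℝ) * (x1 - x2) := by
    calc M.d k x1 - M.d k x2 ≤ |M.d k x1 - M.d k x2| := le_abs_self _
      _ ≤ (M.cd k : ℝ) * |x1 - x2| := hlip
      _ = (M.cd k : ℝ) * (x1 - x2) := by rw [abs_of_nonneg hδ0]
  have hd23 : M.d k x2 ≤ M.d k x3 := M.hd_mono k hx23
  have hA1 : M.Δt * ((M.cd k : ℝ) * (x1 - x2)) ≤ B - b := by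
    have hass := M.assumption1_d k
    have hδ' : (B - b) = (x1 - x2) * (M.βbar k * M.l k) := by
      rw [hδ]; field_simp
    rw [hδ']
    have hcd0 : (0:ℝ) ≤ (M.cd k : ℝ) := (M.cd k).2
    have : M.Δt * (M.cd k : ℝ) ≤ M.βbar k * M.l k := by
      unfold βbar; nlinarith
    nlinarith
  have h2 := mul_le_mul_of_nonneg_left hd23 (le_of_lt M.hΔt)
  nlinarith [mul_le_mul_of_nonneg_left hkey (le_of_lt M.hΔt)]

lemma aux_s_step (k : ℕ) {b B c C r rlo : ℝ} (hb : b ≤ B) (hc : c ≤ C) (hr : rlo ≤ r) :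
    b + M.Δt * M.s k ((b - c / M.βbar k + r) / M.l k) ≤
    B + M.Δt * M.s k ((B - C / M.βbar k + rlo) / M.l k) := by
  have hβ : 0 < M.βbar k := M.aux_βbar_pos k
  have hl : 0 < M.l k := M.hl k
  set x1 := (b - c / M.βbar k + r) / M.l k with hx1
  set x2 := (B - c / M.βbar k + r) / M.l k with hx2
  set x3 := (B - C / M.βbar k + rlo) / M.l k with hx3
  have hδ : x2 - x1 = (B - b) / M.l k := by
    rw [hx1, hx2]; field_simp; try ring
  have hδ0 : 0 ≤ x2 - x1 := by
    rw [hδ]; apply div_nonneg (by linarith) hl.le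
  have hx32 : x3 ≤ x2 := by
    have h1 : c / M.βbar k ≤ C / M.βbar k := div_le_div_of_nonneg_right hc hβ.le
    apply div_le_div_of_nonneg_right (by linarith) hl.le
  have hlip := (M.hs_lip k).dist_le_mul x1 x2
  rw [Real.dist_eq, Real.dist_eq] at hlip
  have hkey : M.s k x1 - M.s k x2 ≤ (M.cs k : ℝ) * (x2 - x1) := by
    calc M.s k x1 - M.s k x2 ≤ |M.s k x1 - M.s k x2| := le_abs_self _
      _ ≤ (M.cs k : ℝ) * |x1 - x2| := hlip
      _ = (M.cs k : ℝ) * (x2 - x1) := by rw [abs_sub_comm, abs_of_nonneg hδ0]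
  have hs23 : M.s k x2 ≤ M.s k x3 := M.hs_anti k hx32
  have hA1 : M.Δt * ((M.cs k : ℝ) * (x2 - x1)) ≤ B - b := by
    have hass := M.assumption1_s k
    have hδ' : (B - b) = (x2 - x1) * M.l k := by rw [hδ]; field_simp
    rw [hδ']
    have hcs0 : (0:ℝ) ≤ (M.cs k : ℝ) := (M.cs k).2
    nlinarith
  have h2 := mul_le_mul_of_nonneg_left hs23 (le_of_lt M.hΔt)
  nlinarith [mul_le_mul_of_nonneg_left hkey (le_of_lt M.hΔt)]

end CTM

/-- **Lemma 5 (one-step optimality propagation).**  Consider a monotonic CTM in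
its cumulative (CCTM) formulation.  Let `(Φ, R)` be a feasible CCTM trajectory and
fix a cell `k` and a time `t` such that `Φ_j(t) = Φ*_j(t)` for
`j ∈ {k−1, k, k+1}` and cells `k` and `k+1` are nonrestrictive at time `t`
(densities `ρ_j(t) = (Φ_{j−1}(t) − Φ_j(t)/β̄_j + R_j(t))/l_j`, queues
`q_j(t) = W_j(t) − R_j(t)`).  Then `Φ_k(t+1) = Φ*_k(t+1)`. -/
theorem one_step_optimality_propagation {n : ℕ} (M : CTM n)
    (w0 : ℕ → ℝ) (W : ℕ → ℕ → ℝ) (rbar qbar : ℕ → ℝ) (Φ0 : ℕ → ℝ)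
    (Φ R : ℕ → ℕ → ℝ)
    (hfeas : M.FeasibleCCTM w0 W rbar qbar Φ0 Φ R)
    (t k : ℕ) (hk1 : 1 ≤ k) (hkn : k ≤ n - 1)
    (hopt : ∀ j ∈ ({k - 1, k, k + 1} : Set ℕ),
      Φ t j = M.Φstar w0 W rbar qbar Φ0 t j)
    (hnr_k : ¬ M.Restrictive (w0 t) (M.ρof (Φ t) (R t))
        (fun j => W t j - R t j) qbar k)
    (hnr_k1 : ¬ M.Restrictive (w0 t) (M.ρof (Φ t) (R t))
        (fun j => W t j - R t j) qbar (k + 1)) :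
    Φ (t + 1) k = M.Φstar w0 W rbar qbar Φ0 (t + 1) k := by
  classical
  have hkn' : k < n := by omega
  have hk1n : k + 1 ≤ n := by omega
  have hφ : M.flow (w0 t) (M.ρof (Φ t) (R t)) k
      = min (M.d k (M.ρof (Φ t) (R t) k)) (M.s (k+1) (M.ρof (Φ t) (R t) (k+1))) := by
    unfold CTM.flow; rw [if_neg (by omega), if_pos hkn']
  have hdynk : Φ (t+1) k = Φ t k + M.Δt * M.flow (w0 t) (M.ρof (Φ t) (R t)) k :=
    hfeas.2.2.1 t k (le_of_lt hkn')
  have hq_k := hfeas.2.2.2.2 t k hk1 (le_of_lt hkn')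
  have hq_k1 := hfeas.2.2.2.2 t (k+1) (by omega) hk1n
  have hρk : M.ρof (Φ t) (R t) k
      = (Φ t (k-1) - Φ t k / M.βbar k + R t k) / M.l k := rfl
  have hρk1 : M.ρof (Φ t) (R t) (k+1)
      = (Φ t k - Φ t (k+1) / M.βbar (k+1) + R t (k+1)) / M.l (k+1) := by
    simp [CTM.ρof]
  set D := M.d k ((Φ t (k-1) - Φ t k / M.βbar k + W t k) / M.l k) with hD
  set S := M.s (k+1) ((Φ t k - Φ t (k+1) / M.βbar (k+1)
      + (W t (k+1) - qbar (k+1))) / M.l (k+1)) with hS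
  -- Step 1: min D S ≤ flow_k
  have hmin : min D S ≤ M.flow (w0 t) (M.ρof (Φ t) (R t)) k := by
    have hFk : M.F k = min (M.d k (M.ρc k)) (M.s (k+1) (M.ρc (k+1))) := if_pos hkn'
    have hDSF : min D S ≤ M.F k := by
      rw [hFk]; exact min_le_min (M.aux_d_le k _) (M.aux_s_le (k+1) _)
    rcases le_total (M.d k (M.ρof (Φ t) (R t) k)) (M.s (k+1) (M.ρof (Φ t) (R t) (k+1)))
      with hds | hsd
    · rw [hφ, min_eq_left hds]
      by_cases hF : M.d k (M.ρof (Φ t) (R t) k) < M.F k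
      · have hq0 : ¬ (0 < W t k - R t k) := by
          intro h
          apply hnr_k
          unfold CTM.Restrictive
          exact Or.inr ⟨h, by rw [hφ]; exact min_eq_left hds, hF⟩
        have hWR : W t k = R t k := le_antisymm (by linarith [not_lt.1 hq0]) hq_k.2
        have hDeq : D = M.d k (M.ρof (Φ t) (R t) k) := by
          rw [hD, hρk, hWR]
        calc min D S ≤ D := min_le_left _ _
          _ = _ := hDeq
      · exact le_trans hDSF (not_lt.1 hF)
    · rw [hφ, min_eq_right hsd]
      by_cases hF : M.s (k+1) (M.ρof (Φ t) (R t) (k+1)) < M.F k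
      · have hq1 : ¬ (W t (k+1) - R t (k+1) < qbar (k+1)) := by
          intro h
          apply hnr_k1
          unfold CTM.Restrictive
          left
          refine ⟨h, ?_, ?_⟩
          · show M.flow (w0 t) (M.ρof (Φ t) (R t)) (k+1-1)
              = M.s (k+1) (M.ρof (Φ t) (R t) (k+1))
            have : k + 1 - 1 = k := rfl
            rw [this, hφ]; exact min_eq_right hsd
          · show M.s (k+1) (M.ρof (Φ t) (R t) (k+1)) < M.F (k+1-1)
            have : k + 1 - 1 = k := rfl
            rw [this]; exact hF
        have hR1 : W t (k+1) - qbar (k+1) = R t (k+1) := by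
          have h1 := hq_k1.1
          linarith [not_lt.1 hq1]
        have hSeq : S = M.s (k+1) (M.ρof (Φ t) (R t) (k+1)) := by
          rw [hS, hρk1, hR1]
        calc min D S ≤ S := min_le_right _ _
          _ = _ := hSeq
      · exact le_trans hDSF (not_lt.1 hF)
  -- Step 2: every feasible trajectory is dominated at (t+1, k)
  have hub : ∀ x ∈ {x : ℝ | ∃ Φ' R' : ℕ → ℕ → ℝ,
      M.FeasibleCCTM w0 W rbar qbar Φ0 Φ' R' ∧ x = Φ' (t+1) k}, x ≤ Φ (t+1) k := by
    rintro x ⟨Φ', R', hf', rfl⟩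
    have hle : ∀ j ∈ ({k-1, k, k+1} : Set ℕ), j ≤ n → Φ' t j ≤ Φ t j := by
      intro j hj hjn
      rw [hopt j hj]
      unfold CTM.Φstar
      exact le_csSup (M.aux_bddAbove w0 W rbar qbar Φ0 t j hjn) ⟨Φ', R', hf', rfl⟩
    have ha := hle (k-1) (by simp) (by omega)
    have hb := hle k (by simp) (by omega)
    have hc := hle (k+1) (by simp) hk1n
    have hrk : R' t k ≤ W t k := (hf'.2.2.2.2 t k hk1 (by omega)).2
    have hrk1 : W t (k+1) - qbar (k+1) ≤ R' t (k+1) :=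
      (hf'.2.2.2.2 t (k+1) (by omega) hk1n).1
    have hdyn' : Φ' (t+1) k = Φ' t k + M.Δt * M.flow (w0 t) (M.ρof (Φ' t) (R' t)) k :=
      hf'.2.2.1 t k (by omega)
    have hφ' : M.flow (w0 t) (M.ρof (Φ' t) (R' t)) k
        = min (M.d k (M.ρof (Φ' t) (R' t) k)) (M.s (k+1) (M.ρof (Φ' t) (R' t) (k+1))) := by
      unfold CTM.flow; rw [if_neg (by omega), if_pos hkn']
    have hρ'k : M.ρof (Φ' t) (R' t) k
        = (Φ' t (k-1) - Φ' t k / M.βbar k + R' t k) / M.l k := rfl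
    have hρ'k1 : M.ρof (Φ' t) (R' t) (k+1)
        = (Φ' t k - Φ' t (k+1) / M.βbar (k+1) + R' t (k+1)) / M.l (k+1) := by
      simp [CTM.ρof]
    have h1 : Φ' t k + M.Δt * M.d k (M.ρof (Φ' t) (R' t) k) ≤ Φ t k + M.Δt * D := by
      rw [hρ'k, hD]
      exact M.aux_d_step k ha hb hrk
    have h2 : Φ' t k + M.Δt * M.s (k+1) (M.ρof (Φ' t) (R' t) (k+1))
        ≤ Φ t k + M.Δt * S := by
      rw [hρ'k1, hS]
      exact M.aux_s_step (k+1) hb hc hrk1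
    have hstep : Φ' (t+1) k ≤ Φ t k + M.Δt * min D S := by
      rw [hdyn', hφ']
      rcases le_total D S with hDS | hSD
      · rw [min_eq_left hDS]
        have := mul_le_mul_of_nonneg_left
          (min_le_left (M.d k (M.ρof (Φ' t) (R' t) k))
            (M.s (k+1) (M.ρof (Φ' t) (R' t) (k+1)))) M.hΔt.le
        linarith
      · rw [min_eq_right hSD]
        have := mul_le_mul_of_nonneg_left
          (min_le_right (M.d k (M.ρof (Φ' t) (R' t) k))
            (M.s (k+1) (M.ρof (Φ' t) (R' t) (k+1)))) M.hΔt.le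
        linarith
    have hfin := mul_le_mul_of_nonneg_left hmin M.hΔt.le
    calc Φ' (t+1) k ≤ Φ t k + M.Δt * min D S := hstep
      _ ≤ Φ t k + M.Δt * M.flow (w0 t) (M.ρof (Φ t) (R t)) k := by linarith
      _ = Φ (t+1) k := hdynk.symm
  -- Step 3: conclude
  unfold CTM.Φstar
  apply le_antisymm
  · exact le_csSup ⟨Φ (t+1) k, hub⟩ ⟨Φ, R, hfeas, rfl⟩
  · exact csSup_le ⟨Φ (t+1) k, Φ, R, hfeas, rfl⟩ hub
end

section
/- (TTS expressed in cumulative variables.) For any trajectory of the CTM conservation laws over horizon T, define R_k(t) := Δt·Σ_{τ<t} r_k(τ), W_k(t) := q_k(0) + Δt·Σ_{τ<t} w_k(τ), and Φ_k(t) := Φ_k(0) + Δt·Σ_{τ<t} φ_k(τ), with offsets Φ_k(0) := Σ_{j=k+1}^{n} l_j·ρ_j(0) / (∏_{i=k+1}^{j−1} β̄_i), where the empty product equals 1 (so in particular Φ_n(0) = 0). Then the Total Time Spent satisfies the identity TTS = Δt·Σ_{t=0}^{T} ( Φ_0(t) − Φ_n(t) + Σ_{k=1}^{n} ( W_k(t)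 − (β_k/β̄_k)·Φ_k(t) ) ). -/
/-- **Total Time Spent expressed in cumulative variables.**  For any trajectory of
the CTM conservation laws over horizon `T`, define the cumulative inflows
`R_k(t) = Δt·Σ_{τ<t} r_k(τ)`, cumulative external demands
`W_k(t) = q_k(0) + Δt·Σ_{τ<t} w_k(τ)`, and cumulative flows
`Φ_k(t) = Φ_k(0) + Δt·Σ_{τ<t} φ_k(τ)` with offsets
`Φ_k(0) = Σ_{j=k+1}^{n} l_j·ρ_j(0) / ∏_{i=k+1}^{j−1} β̄_i` (empty product = 1, so
`Φ_n(0) = 0`).  Then the Total Time Spent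
`TTS = Δt·Σ_{t=0}^{T} Σ_{k=1}^{n} (l_k·ρ_k(t) + q_k(t))` satisfies
`TTS = Δt·Σ_{t=0}^{T} (Φ_0(t) − Φ_n(t) + Σ_{k=1}^{n} (W_k(t) − (β_k/β̄_k)·Φ_k(t)))`. -/
theorem tts_in_cumulative_variables (n T : ℕ) (l β : ℕ → ℝ) (Δt : ℝ)
    (hl : ∀ k, 0 < l k) (hβ : ∀ k, 0 ≤ β k ∧ β k < 1) (hΔt : 0 < Δt)
    (φ r w ρ q : ℕ → ℕ → ℝ)
    (hρ : ∀ t k, 1 ≤ k → k ≤ n →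
      ρ (t + 1) k = ρ t k + Δt / l k * (φ t (k - 1) + r t k - φ t k / (1 - β k)))
    (hq : ∀ t k, 1 ≤ k → k ≤ n →
      q (t + 1) k = q t k + Δt * (w t k - r t k))
    (Φ0 : ℕ → ℝ)
    (hΦ0 : ∀ k, Φ0 k = ∑ j ∈ Finset.Icc (k + 1) n,
      l j * ρ 0 j / ∏ i ∈ Finset.Icc (k + 1) (j - 1), (1 - β i)) :
    Δt * ∑ t ∈ Finset.range (T + 1), ∑ k ∈ Finset.Icc 1 n, (l k * ρ t k + q t k) =
      Δt * ∑ t ∈ Finset.range (T + 1),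
        ((Φ0 0 + Δt * ∑ τ ∈ Finset.range t, φ τ 0)
          - (Φ0 n + Δt * ∑ τ ∈ Finset.range t, φ τ n)
          + ∑ k ∈ Finset.Icc 1 n,
              ((q 0 k + Δt * ∑ τ ∈ Finset.range t, w τ k)
                - β k / (1 - β k) * (Φ0 k + Δt * ∑ τ ∈ Finset.range t, φ τ k))) := by
  have hl0 : ∀ k, l k ≠ 0 := fun k => (hl k).ne'
  have hβ1 : ∀ k, (1 : ℝ) - β k ≠ 0 := fun k => by have := (hβ k).2; intro h; linarith
  have hρc : ∀ t k, 1 ≤ k → k ≤ n → l k * ρ t k = l k * ρ 0 k +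
      Δt * ∑ τ ∈ Finset.range t, (φ τ (k - 1) + r τ k - φ τ k / (1 - β k)) := by
    intro t k hk1 hkn
    induction t with
    | zero => simp
    | succ t ih =>
      have hcan : l k * (Δt / l k * (φ t (k - 1) + r t k - φ t k / (1 - β k))) =
          Δt * (φ t (k - 1) + r t k - φ t k / (1 - β k)) := by
        rw [← mul_assoc, mul_comm (l k), mul_assoc, ← mul_assoc, div_mul_cancel₀ _ (hl0 k)]
      rw [hρ t k hk1 hkn, Finset.sum_range_succ, mul_add, ih, hcan]
      ring
  have hqc : ∀ t k, 1 ≤ k → k ≤ n → q t k = q 0 k +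
      Δt * ∑ τ ∈ Finset.range t, (w τ k - r τ k) := by
    intro t k hk1 hkn
    induction t with
    | zero => simp
    | succ t ih =>
      rw [hq t k hk1 hkn, Finset.sum_range_succ, ih]
      ring
  have hΦrec : ∀ k, 1 ≤ k → k ≤ n → Φ0 (k - 1) = l k * ρ 0 k + Φ0 k / (1 - β k) := by
    intro k hk1 hkn
    have hk : k - 1 + 1 = k := Nat.succ_pred_eq_of_pos hk1
    rw [hΦ0 (k - 1), hΦ0 k, hk, ← Finset.Ioc_insert_left hkn, ← Finset.Icc_add_one_left_eq_Ioc,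
      Finset.sum_insert (by simp)]
    congr 1
    · rw [Finset.Icc_eq_empty (by omega), Finset.prod_empty, div_one]
    · rw [Finset.sum_div]
      refine Finset.sum_congr rfl fun j hj => ?_
      have hj1 : k + 1 ≤ j := (Finset.mem_Icc.mp hj).1
      have hins : Finset.Icc k (j - 1) = insert k (Finset.Icc (k + 1) (j - 1)) := by
        rw [← Finset.Ioc_insert_left (by omega), ← Finset.Icc_add_one_left_eq_Ioc]
      rw [hins, Finset.prod_insert (by simp), div_mul_eq_div_div_swap]
  congr 1
  refine Finset.sum_congr rfl fun t _ => ?_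
  have hterm : ∀ k ∈ Finset.Icc 1 n, l k * ρ t k + q t k =
      ((Φ0 (k - 1) + Δt * ∑ τ ∈ Finset.range t, φ τ (k - 1))
        - (Φ0 k + Δt * ∑ τ ∈ Finset.range t, φ τ k))
      + ((q 0 k + Δt * ∑ τ ∈ Finset.range t, w τ k)
        - β k / (1 - β k) * (Φ0 k + Δt * ∑ τ ∈ Finset.range t, φ τ k)) := by
    intro k hk
    obtain ⟨hk1, hkn⟩ := Finset.mem_Icc.mp hk
    rw [hρc t k hk1 hkn, hqc t k hk1 hkn, hΦrec k hk1 hkn]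
    simp only [Finset.sum_add_distrib, Finset.sum_sub_distrib, ← Finset.sum_div]
    field_simp [hβ1 k]
    ring
  rw [Finset.sum_congr rfl hterm, Finset.sum_add_distrib]
  congr 1
  have hmap : ∀ g : ℕ → ℝ, ∑ k ∈ Finset.Icc 1 n, g k = ∑ i ∈ Finset.range n, g (i + 1) := by
    intro g
    rw [← Finset.Ico_add_one_right_eq_Icc, Finset.sum_Ico_eq_sum_range]
    simp [add_comm]
  rw [hmap]
  simp only [Nat.add_sub_cancel]
  exact Finset.sum_range_sub'
    (fun i => Φ0 i + Δt * ∑ τ ∈ Finset.range t, φ τ i) n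
end

section
/- (Best-effort control is not optimal in general.) There exist a monotonic CTM instance (satisfying Assumption 1), a finite horizon T, initial densities and queues, bounds r̄_k, q̄_k, and an external demand profile w_k(t), together with a feasible metering sequence (satisfying 0 ≤ r_k(t) ≤ r̄_k and 0 ≤ q_k(t) ≤ q̄_k for all k, t) whose Total Time Spent is strictly smaller than the Total Time Spent achieved by the closed-loop trajectory under the best-effort feedback controller. -/
open Finset NNReal

-- auxiliary developments to be inserted above the theorem
section Example

noncomputable def rbarEx : ℕ → ℝ := fun k => if k = 1 then 0 else 1
noncomputable def qbarEx : ℕ → ℝ := fun k => if k = 1 then 0 else 2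
noncomputable def wEx : ℕ → ℕ → ℝ := fun t k => if t = 0 ∧ k = 0 then 8 else 0

lemma clampLip (c : ℝ≥0) (P : ℝ) :
    LipschitzWith c (fun x : ℝ => (c : ℝ) * min (max x 0) P) := by
  apply LipschitzWith.of_dist_le_mul
  intro x y
  rw [Real.dist_eq, Real.dist_eq, ← mul_sub, abs_mul, abs_of_nonneg c.coe_nonneg]
  refine mul_le_mul_of_nonneg_left ?_ c.coe_nonneg
  refine (abs_min_sub_min_le_max _ _ _ _).trans (max_le ?_ ?_)
  · exact (abs_max_sub_max_le_max _ _ _ _).trans (by simp)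
  · simp
lemma supLip (C J : ℝ) :
    LipschitzWith 1 (fun x : ℝ => min C (max (J - x) 0)) := by
  apply LipschitzWith.of_dist_le_mul
  intro x y
  rw [Real.dist_eq, Real.dist_eq, NNReal.coe_one, one_mul]
  refine (abs_min_sub_min_le_max _ _ _ _).trans (max_le ?_ ?_)
  · simp
  · refine (abs_max_sub_max_le_max _ _ _ _).trans (max_le ?_ ?_) <;> simp [abs_sub_comm]

noncomputable def MEx : CTM 2 where
  l := fun _ => 1
  β := fun k => if k = 1 then 3/4 else 0
  Δt := 1
  ρjam := fun k => if k = 1 then 8 else 2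
  ρc := fun k => if k = 1 then 4 else 1
  d := fun k x => ((if k = 1 then (1/4 : ℝ≥0) else 1/2 : ℝ≥0) : ℝ) *
      min (max x 0) (if k = 1 then 4 else 1)
  s := fun k x => min ((if k = 1 then (8:ℝ) else 2) - (if k = 1 then (4:ℝ) else 1))
      (max ((if k = 1 then (8:ℝ) else 2) - x) 0)
  cd := fun k => if k = 1 then 1/4 else 1/2
  cs := fun _ => 1
  hl := fun _ => one_pos
  hβ := by intro k; split <;> norm_num
  hΔt := one_pos
  hρjam := by intro k; split <;> norm_num
  hρc := by intro k; split <;> norm_num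
  hd_nonneg := by
    intro k x
    have h1 : (0:ℝ) ≤ min (max x 0) (if k = 1 then (4:ℝ) else 1) :=
      le_min (le_max_right _ _) (by split <;> norm_num)
    positivity
  hd_mono := by
    intro k x y h; dsimp only
    exact mul_le_mul_of_nonneg_left
      (min_le_min (max_le_max h le_rfl) le_rfl) (NNReal.coe_nonneg _)
  hd_lip := by
    intro k; exact clampLip _ _
  hd_zero := by
    intro k x hx
    rw [max_eq_right hx, min_eq_left (by split <;> norm_num), mul_zero]
  hd_const := by
    intro k x hx
    have hc : (0:ℝ) ≤ (if k = 1 then (4:ℝ) else 1) := by split <;> norm_num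
    rw [max_eq_left (le_trans hc hx), min_eq_right hx, max_eq_left hc, min_self]
  hs_nonneg := by
    intro k x
    exact le_min (by split <;> norm_num) (le_max_right _ _)
  hs_anti := by
    intro k x y h; dsimp only
    exact min_le_min le_rfl (max_le_max (by linarith) le_rfl)
  hs_lip := by intro k; exact supLip _ _
  hs_const := by
    intro k x hx
    by_cases hk : k = 1 <;> simp only [hk, if_true, if_false] at hx ⊢ <;>
      rw [max_eq_left (by linarith), max_eq_left (by norm_num),
        min_eq_left (by linarith), min_self]
  hs_zero := by
    intro k x hx
    by_cases hk : k = 1 <;> simp only [hk, if_true, if_false] at hx ⊢ <;>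
      rw [max_eq_right (by linarith), min_eq_right (by norm_num)]
  assumption1_d := by
    intro k; split <;> push_cast <;> norm_num
  assumption1_s := by
    intro k; push_cast; norm_num

/-- initial state -/
noncomputable def initEx : (ℕ → ℝ) × (ℕ → ℝ) := (fun _ => 0, fun k => if k = 2 then 1 else 0)

/-- closed-loop best-effort state -/
noncomputable def beSt : ℕ → (ℕ → ℝ) × (ℕ → ℝ)
  | 0 => initEx
  | (t+1) =>
    (MEx.ρnext (wEx t 0) (beSt t).1
        (MEx.beRate (wEx t 0) (beSt t).1 (beSt t).2 (fun j => wEx t j) rbarEx qbarEx),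
      fun k => (beSt t).2 k + MEx.Δt * (wEx t k -
        MEx.beRate (wEx t 0) (beSt t).1 (beSt t).2 (fun j => wEx t j) rbarEx qbarEx k))

/-- open-loop state with zero metering -/
noncomputable def alSt : ℕ → (ℕ → ℝ) × (ℕ → ℝ)
  | 0 => initEx
  | (t+1) =>
    (MEx.ρnext (wEx t 0) (alSt t).1 (fun _ => 0),
      fun k => (alSt t).2 k + MEx.Δt * (wEx t k - 0))

end Example

lemma beSt1 : (beSt 1).1 1 = 8 ∧ (beSt 1).1 2 = 1 ∧ (beSt 1).2 1 = 0 ∧ (beSt 1).2 2 = 0 := by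
  norm_num [beSt, initEx, MEx, wEx, rbarEx, qbarEx,
    CTM.ρnext, CTM.flow, CTM.beRate, CTM.sat, CTM.βbar, min_def, max_def]

lemma beStep2 (t : ℕ) (ht : t ≠ 0)
    (h1 : (beSt t).1 1 = 8) (h2 : (beSt t).1 2 = 1)
    (h3 : (beSt t).2 1 = 0) (h4 : (beSt t).2 2 = 0) :
    (beSt (t+1)).1 1 = 4 ∧ (beSt (t+1)).1 2 = 3/2 ∧
      (beSt (t+1)).2 1 = 0 ∧ (beSt (t+1)).2 2 = 0 := by
  norm_num [beSt, h1, h2, h3, h4, MEx, wEx, ht, rbarEx, qbarEx,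
    CTM.ρnext, CTM.flow, CTM.beRate, CTM.sat, CTM.βbar, min_def, max_def]

lemma beStep3 (t : ℕ) (ht : t ≠ 0)
    (h1 : (beSt t).1 1 = 4) (h2 : (beSt t).1 2 = 3/2)
    (h3 : (beSt t).2 1 = 0) (h4 : (beSt t).2 2 = 0) :
    (beSt (t+1)).1 1 = 2 ∧ (beSt (t+1)).1 2 = 3/2 ∧
      (beSt (t+1)).2 1 = 0 ∧ (beSt (t+1)).2 2 = 0 := by
  norm_num [beSt, h1, h2, h3, h4, MEx, wEx, ht, rbarEx, qbarEx,
    CTM.ρnext, CTM.flow, CTM.beRate, CTM.sat, CTM.βbar, min_def, max_def]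

lemma beSt2 : (beSt 2).1 1 = 4 ∧ (beSt 2).1 2 = 3/2 ∧ (beSt 2).2 1 = 0 ∧ (beSt 2).2 2 = 0 :=
  beStep2 1 one_ne_zero beSt1.1 beSt1.2.1 beSt1.2.2.1 beSt1.2.2.2

lemma beSt3 : (beSt 3).1 1 = 2 ∧ (beSt 3).1 2 = 3/2 ∧ (beSt 3).2 1 = 0 ∧ (beSt 3).2 2 = 0 :=
  beStep3 2 two_ne_zero beSt2.1 beSt2.2.1 beSt2.2.2.1 beSt2.2.2.2

lemma alSt1 : (alSt 1).1 1 = 8 ∧ (alSt 1).1 2 = 0 ∧ (alSt 1).2 1 = 0 ∧ (alSt 1).2 2 = 1 := by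
  norm_num [alSt, initEx, MEx, wEx, CTM.ρnext, CTM.flow, CTM.βbar, min_def, max_def]

lemma alStep2 (t : ℕ) (ht : t ≠ 0)
    (h1 : (alSt t).1 1 = 8) (h2 : (alSt t).1 2 = 0)
    (h3 : (alSt t).2 1 = 0) (h4 : (alSt t).2 2 = 1) :
    (alSt (t+1)).1 1 = 4 ∧ (alSt (t+1)).1 2 = 1 ∧
      (alSt (t+1)).2 1 = 0 ∧ (alSt (t+1)).2 2 = 1 := by
  norm_num [alSt, h1, h2, h3, h4, MEx, wEx, ht, CTM.ρnext, CTM.flow, CTM.βbar, min_def, max_def]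

lemma alStep3 (t : ℕ) (ht : t ≠ 0)
    (h1 : (alSt t).1 1 = 4) (h2 : (alSt t).1 2 = 1)
    (h3 : (alSt t).2 1 = 0) (h4 : (alSt t).2 2 = 1) :
    (alSt (t+1)).1 1 = 0 ∧ (alSt (t+1)).1 2 = 3/2 ∧
      (alSt (t+1)).2 1 = 0 ∧ (alSt (t+1)).2 2 = 1 := by
  norm_num [alSt, h1, h2, h3, h4, MEx, wEx, ht, CTM.ρnext, CTM.flow, CTM.βbar, min_def, max_def]

lemma alSt2 : (alSt 2).1 1 = 4 ∧ (alSt 2).1 2 = 1 ∧ (alSt 2).2 1 = 0 ∧ (alSt 2).2 2 = 1 :=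
  alStep2 1 one_ne_zero alSt1.1 alSt1.2.1 alSt1.2.2.1 alSt1.2.2.2

lemma alSt3 : (alSt 3).1 1 = 0 ∧ (alSt 3).1 2 = 3/2 ∧ (alSt 3).2 1 = 0 ∧ (alSt 3).2 2 = 1 :=
  alStep3 2 two_ne_zero alSt2.1 alSt2.2.1 alSt2.2.2.1 alSt2.2.2.2

/-- **Best-effort control is not optimal in general (Examples 1 and 2).**
There exist a monotonic CTM instance (satisfying Assumption 1), a finite horizon
`T`, initial densities and queues, bounds `r̄_k, q̄_k`, and an external demand
profile `w`, together with a feasible metering sequence `r'` (satisfying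
`0 ≤ r'_k(t) ≤ r̄_k` and `0 ≤ q'_k(t) ≤ q̄_k`) whose Total Time Spent is strictly
smaller than the Total Time Spent achieved by the closed-loop trajectory under
the best-effort feedback controller. -/
theorem best_effort_not_optimal :
    ∃ (n : ℕ) (M : CTM n) (T : ℕ) (w : ℕ → ℕ → ℝ) (rbar qbar : ℕ → ℝ)
      (ρ q ρ' q' r' : ℕ → ℕ → ℝ),
      (∀ k, 0 ≤ rbar k) ∧ (∀ k, 0 ≤ qbar k) ∧
      (∀ t, 0 ≤ w t 0) ∧
      (∀ t k, 1 ≤ k → k ≤ n → w t k ∈ Set.Icc 0 (rbar k)) ∧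
      -- initial conditions, shared by both trajectories
      (∀ k, 1 ≤ k → k ≤ n →
        ρ 0 k ∈ Set.Icc 0 (M.ρjam k) ∧ q 0 k ∈ Set.Icc 0 (qbar k) ∧
        ρ' 0 k = ρ 0 k ∧ q' 0 k = q 0 k) ∧
      -- `(ρ, q)` is the closed-loop trajectory under the best-effort feedback
      M.Traj w ρ q
        (fun t => M.beRate (w t 0) (ρ t) (q t) (fun j => w t j) rbar qbar) ∧
      -- `(ρ', q', r')` is a feasible trajectory
      M.Traj w ρ' q' r' ∧
      (∀ t k, t < T → 1 ≤ k → k ≤ n → r' t k ∈ Set.Icc 0 (rbar k)) ∧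
      (∀ t k, t ≤ T → 1 ≤ k → k ≤ n → q' t k ∈ Set.Icc 0 (qbar k)) ∧
      -- which achieves strictly smaller Total Time Spent
      M.TTS T ρ' q' < M.TTS T ρ q := by
  refine ⟨2, MEx, 3, wEx, rbarEx, qbarEx,
    (fun t => (beSt t).1), (fun t => (beSt t).2),
    (fun t => (alSt t).1), (fun t => (alSt t).2),
    (fun _ _ => 0), ?_, ?_, ?_, ?_, ?_, ?_, ?_, ?_, ?_, ?_⟩
  · intro k; unfold rbarEx; split <;> norm_num
  · intro k; unfold qbarEx; split <;> norm_num
  · intro t; unfold wEx; split <;> norm_num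
  · intro t k hk1 hk2
    have hw : wEx t k = 0 := by unfold wEx; simp; omega
    constructor
    · simp [hw]
    · rw [hw]; unfold rbarEx; split <;> norm_num
  · intro k hk1 hk2
    interval_cases k <;>
      simp [beSt, alSt, initEx, MEx, qbarEx]
  · intro t k hk1 hk2
    exact ⟨by simp only [beSt], by simp only [beSt]⟩
  · intro t k hk1 hk2
    exact ⟨by simp only [alSt], by simp only [alSt]⟩
  · intro t k ht hk1 hk2
    constructor
    · exact le_rfl
    · unfold rbarEx; split <;> norm_num
  · intro t k ht hk1 hk2
    interval_cases t <;> interval_cases k <;>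
      norm_num [alSt, initEx, qbarEx, MEx, wEx]
  · have hIcc : (Finset.Icc 1 2 : Finset ℕ) = {1, 2} := by decide
    rw [CTM.TTS, CTM.TTS, hIcc]
    simp only [Finset.sum_range_succ, Finset.range_zero, Finset.sum_empty,
      Finset.sum_insert (by decide : (1:ℕ) ∉ ({2} : Finset ℕ)), Finset.sum_singleton,
      beSt1.1, beSt1.2.1, beSt1.2.2.1, beSt1.2.2.2,
      beSt2.1, beSt2.2.1, beSt2.2.2.1, beSt2.2.2.2,
      beSt3.1, beSt3.2.1, beSt3.2.2.1, beSt3.2.2.2,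
      alSt1.1, alSt1.2.1, alSt1.2.2.1, alSt1.2.2.2,
      alSt2.1, alSt2.2.1, alSt2.2.2.1, alSt2.2.2.2,
      alSt3.1, alSt3.2.1, alSt3.2.2.1, alSt3.2.2.2]
    norm_num [beSt, alSt, initEx, MEx]
end
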